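/- arXiv:1906.04118 — 4 statements merged into one kernel-verified Lean document; each statement's English description precedes it below -/
import Mathlib

section
/- Let K and L be convex bodies in ℝ^n such that K ∪ L is convex. Then (K ∪ L) + (K ∩ L) = K + L, where + denotes the Minkowski sum of sets. -/
open MeasureTheory Filter Topology Metric Set
open scoped InnerProductSpace ENNReal NNReal Pointwise

noncomputable section

/-- Euclidean space `ℝ^n`. -/
abbrev Eucl (n : ℕ) : Type := EuclideanSpace ℝ (Fin n)

/-- The support function of a subset of `ℝ^n`. -/
def suppFn {n : ℕ} (K : Set (Eucl n)) (x : Eucl n) : ℝ :=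
  sSup ((fun y => ⟪x, y⟫_ℝ) '' K)

/-- A convex body: a nonempty compact convex subset of `ℝ^n`. -/
def IsConvexBody {n : ℕ} (K : Set (Eucl n)) : Prop :=
  K.Nonempty ∧ IsCompact K ∧ Convex ℝ K

/-!
For `x ∈ K` and `y ∈ L` the segment `[x, y]` lies in the convex set `K ∪ L`; being connected and
covered by the closed sets `K` and `L`, both of which it meets, it contains a point `z ∈ K ∩ L`.
The reflection `x + y - z` of `z` in the midpoint of the segment lies on the segment as well, hence
in `K ∪ L`, and `x + y = (x + y - z) + z`.
-/

section Segment

open Convex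

variable {𝕜 E : Type*} [Ring 𝕜] [PartialOrder 𝕜] [AddCommGroup E] [Module 𝕜 E]

theorem add_sub_mem_segment {x y z : E} (hz : z ∈ [x -[𝕜] y]) : x + y - z ∈ [x -[𝕜] y] := by
  obtain ⟨a, b, ha, hb, hab, rfl⟩ := hz
  refine ⟨b, a, hb, ha, by rwa [add_comm], ?_⟩
  calc b • x + a • y = ((a + b) • x + (a + b) • y) - (a • x + b • y) := by
        simp only [add_smul]; abel
    _ = x + y - (a • x + b • y) := by rw [hab, one_smul, one_smul]

end Segment

section ClosedSets

open Convex

variable {E : Type*} [AddCommGroup E] [Module ℝ E] [TopologicalSpace E] [ContinuousAdd E]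
  [ContinuousSMul ℝ E] {s t : Set E}

theorem exists_mem_segment_inter_of_segment_subset_union (hs : IsClosed s) (ht : IsClosed t)
    {x y : E} (hx : x ∈ s) (hy : y ∈ t) (hxy : [x -[ℝ] y] ⊆ s ∪ t) :
    ∃ z ∈ [x -[ℝ] y], z ∈ s ∩ t :=
  isPreconnected_closed_iff.1 (convex_segment x y).isPreconnected s t hs ht hxy
    ⟨x, left_mem_segment ℝ x y, hx⟩ ⟨y, right_mem_segment ℝ x y, hy⟩

theorem add_subset_union_add_inter (hs : IsClosed s) (ht : IsClosed t)
    (hst : Convex ℝ (s ∪ t)) : s + t ⊆ (s ∪ t) + (s ∩ t) := by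
  rintro _ ⟨x, hx, y, hy, rfl⟩
  have hxy : [x -[ℝ] y] ⊆ s ∪ t := hst.segment_subset (.inl hx) (.inr hy)
  obtain ⟨z, hz, hzst⟩ := exists_mem_segment_inter_of_segment_subset_union hs ht hx hy hxy
  exact ⟨x + y - z, hxy (add_sub_mem_segment hz), z, hzst, sub_add_cancel _ _⟩

theorem union_add_inter_eq_add (hs : IsClosed s) (ht : IsClosed t) (hst : Convex ℝ (s ∪ t)) :
    (s ∪ t) + (s ∩ t) = s + t :=
  union_add_inter_subset.antisymm (add_subset_union_add_inter hs ht hst)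

end ClosedSets

/-- For convex bodies `K, L ⊆ ℝ^n` with `K ∪ L` convex, the Minkowski sum
satisfies `(K ∪ L) + (K ∩ L) = K + L`. -/
theorem minkowski_sum_of_union_and_intersection (n : ℕ) (K L : Set (Eucl n))
    (hK : IsConvexBody K) (hL : IsConvexBody L) (hUnion : Convex ℝ (K ∪ L)) :
    (K ∪ L) + (K ∩ L) = K + L := by
  obtain ⟨-, hKc, -⟩ := hK
  obtain ⟨-, hLc, -⟩ := hL
  exact union_add_inter_eq_add hKc.isClosed hLc.isClosed hUnion
end
end

section
/- Let f : ℝ^n → ℝ be a piecewise linear function. Then there exist m ∈ ℕ and convex bodies K₁, …, K_m in ℝ^n such that f(x) = min_{1 ≤ i ≤ m} h_{K_i}(x) for every x ∈ ℝ^n, i.e. f is the pointwise minimum of finitely many support functions. -/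
/-!
Being linear on the pieces `Cᵢ` of a finite closed cover, `f` is `M`-Lipschitz, where `M` bounds
the norms of the linear forms `Lᵢ`; hence `gᵢ = Lᵢ + 2M · dist(·, Cᵢ)` satisfies `f ≤ gᵢ` with
equality on `Cᵢ`, so `f = minᵢ gᵢ`. Since `Cᵢ` is a convex cone, `dist(·, Cᵢ)` is sublinear, hence
so is `gᵢ`; by Hahn–Banach a sublinear function of linear growth is the support function of the
convex body `{y | ⟪x, y⟫ ≤ gᵢ x for all x}`.
-/

open MeasureTheory Filter Topology Metric Set
open scoped InnerProductSpace ENNReal NNReal Pointwise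

noncomputable section

/-- A piecewise linear function on `ℝ^n`: a continuous function which is linear
on each cone of a finite family of closed convex cones with vertex at the
origin, pairwise disjoint interiors, and union all of `ℝ^n`. -/
def IsPiecewiseLinear {n : ℕ} (f : Eucl n → ℝ) : Prop :=
  Continuous f ∧ ∃ (m : ℕ) (C : Fin m → Set (Eucl n)) (L : Fin m → (Eucl n →ₗ[ℝ] ℝ)),
    (∀ i, IsClosed (C i)) ∧ (∀ i, Convex ℝ (C i)) ∧
    (∀ i, ∀ t : ℝ, 0 ≤ t → ∀ x ∈ C i, t • x ∈ C i) ∧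
    (Pairwise fun i j => interior (C i) ∩ interior (C j) = ∅) ∧
    (⋃ i, C i) = Set.univ ∧
    (∀ i, ∀ x ∈ C i, f x = L i x)

structure IsSublinear {E : Type*} [AddCommGroup E] [Module ℝ E] (g : E → ℝ) : Prop where
  map_smul_of_pos : ∀ c : ℝ, 0 < c → ∀ x, g (c • x) = c * g x
  map_add_le : ∀ x y, g (x + y) ≤ g x + g y

namespace IsSublinear

variable {E : Type*} [AddCommGroup E] [Module ℝ E] {g : E → ℝ}

lemma map_zero (hg : IsSublinear g) : g 0 = 0 := by
  have h := hg.map_smul_of_pos 2 two_pos 0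
  rw [smul_zero] at h
  linarith

lemma mul_le_map_smul (hg : IsSublinear g) (t : ℝ) (x : E) : t * g x ≤ g (t • x) := by
  rcases lt_trichotomy t 0 with ht | rfl | ht
  · have h := hg.map_add_le (t • x) ((-t) • x)
    rw [← add_smul, add_neg_cancel, zero_smul, hg.map_zero,
      hg.map_smul_of_pos (-t) (neg_pos.2 ht)] at h
    linarith
  · simp [hg.map_zero]
  · rw [hg.map_smul_of_pos t ht]

lemma add (hg : IsSublinear g) {g' : E → ℝ} (hg' : IsSublinear g') : IsSublinear (g + g') where
  map_smul_of_pos c hc x := by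
    simp only [Pi.add_apply, hg.map_smul_of_pos c hc, hg'.map_smul_of_pos c hc, mul_add]
  map_add_le x y := by
    simp only [Pi.add_apply]
    linarith [hg.map_add_le x y, hg'.map_add_le x y]

lemma const_mul (hg : IsSublinear g) {a : ℝ} (ha : 0 ≤ a) : IsSublinear (fun x => a * g x) where
  map_smul_of_pos c hc x := by rw [hg.map_smul_of_pos c hc]; ring
  map_add_le x y := by nlinarith [hg.map_add_le x y]

/-- Hahn–Banach: extend `t • x₀ ↦ t * g x₀` from the line through `x₀`. -/
lemma exists_linearMap_le_eq (hg : IsSublinear g) (x₀ : E) :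
    ∃ ℓ : E →ₗ[ℝ] ℝ, (∀ x, ℓ x ≤ g x) ∧ ℓ x₀ = g x₀ := by
  let p : E →ₗ.[ℝ] ℝ := LinearPMap.mkSpanSingleton' x₀ (g x₀) fun (c : ℝ) hc => by
    rcases smul_eq_zero.1 hc with rfl | rfl
    · exact zero_smul ℝ _
    · rw [hg.map_zero, smul_zero]
  have hp : ∀ x : p.domain, p x ≤ g x := by
    rintro ⟨x, hx⟩
    obtain ⟨t, rfl⟩ := Submodule.mem_span_singleton.1 hx
    rw [LinearPMap.mkSpanSingleton'_apply, RingHom.id_apply, smul_eq_mul]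
    exact hg.mul_le_map_smul t x₀
  obtain ⟨ℓ, hℓp, hℓg⟩ := exists_extension_of_le_sublinear p g hg.map_smul_of_pos hg.map_add_le hp
  refine ⟨ℓ, hℓg, ?_⟩
  have hx₀ : x₀ ∈ p.domain := Submodule.mem_span_singleton_self x₀
  rw [hℓp ⟨x₀, hx₀⟩, LinearPMap.mkSpanSingleton'_apply_self]

end IsSublinear

lemma LinearMap.isSublinear {E : Type*} [AddCommGroup E] [Module ℝ E] (ℓ : E →ₗ[ℝ] ℝ) :
    IsSublinear ℓ where
  map_smul_of_pos c _ x := by rw [map_smul, smul_eq_mul]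
  map_add_le x y := (map_add ℓ x y).le

lemma IsSublinear.exists_inner_le_eq {E : Type*} [NormedAddCommGroup E] [InnerProductSpace ℝ E]
    [FiniteDimensional ℝ E] {g : E → ℝ} (hg : IsSublinear g) (x₀ : E) :
    ∃ y : E, (∀ x, ⟪x, y⟫_ℝ ≤ g x) ∧ ⟪x₀, y⟫_ℝ = g x₀ := by
  obtain ⟨ℓ, hℓg, hℓx₀⟩ := hg.exists_linearMap_le_eq x₀
  have hy : ∀ x, ⟪x, (InnerProductSpace.toDual ℝ E).symm ℓ.toContinuousLinearMap⟫_ℝ = ℓ x :=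
    fun x => by rw [real_inner_comm, InnerProductSpace.toDual_symm_apply,
      LinearMap.coe_toContinuousLinearMap']
  exact ⟨_, fun x => (hy x).trans_le (hℓg x), (hy x₀).trans hℓx₀⟩

lemma IsSublinear.exists_isConvexBody_suppFn_eq {n : ℕ} {g : Eucl n → ℝ} (hg : IsSublinear g)
    {R : ℝ} (hR : ∀ x, g x ≤ R * ‖x‖) :
    ∃ K : Set (Eucl n), IsConvexBody K ∧ ∀ x, suppFn K x = g x := by
  set K : Set (Eucl n) := ⋂ x, {y | ⟪x, y⟫_ℝ ≤ g x}
  have hmem : ∀ y, y ∈ K ↔ ∀ x, ⟪x, y⟫_ℝ ≤ g x := fun y => mem_iInter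
  have hattained : ∀ x₀, ∃ y ∈ K, ⟪x₀, y⟫_ℝ = g x₀ := fun x₀ => by
    obtain ⟨y, hyg, hyx₀⟩ := hg.exists_inner_le_eq x₀
    exact ⟨y, (hmem y).2 hyg, hyx₀⟩
  have hbounded : Bornology.IsBounded K := by
    refine isBounded_iff_forall_norm_le.2 ⟨|R|, fun y hy => ?_⟩
    have h := ((hmem y).1 hy y).trans (hR y)
    rw [real_inner_self_eq_norm_mul_norm] at h
    nlinarith [le_abs_self R, norm_nonneg y, abs_nonneg R]
  have hclosed : IsClosed K :=
    isClosed_iInter fun x => isClosed_le (continuous_const.inner continuous_id) continuous_const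
  have hconvex : Convex ℝ K :=
    convex_iInter fun x => convex_halfSpace_le (innerₛₗ ℝ x).isLinear (g x)
  refine ⟨K, ⟨(hattained 0).imp fun y hy => hy.1, isCompact_of_isClosed_isBounded hclosed hbounded,
    hconvex⟩, fun x => ?_⟩
  obtain ⟨y, hyK, hyx⟩ := hattained x
  refine IsGreatest.csSup_eq ⟨⟨y, hyK, hyx⟩, ?_⟩
  rintro _ ⟨z, hz, rfl⟩
  exact (hmem z).1 hz x

namespace ConvexCone

variable {E : Type*} [NormedAddCommGroup E] [NormedSpace ℝ E] (K : ConvexCone ℝ E)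

lemma infDist_smul_of_pos {c : ℝ} (hc : 0 < c) (x : E) :
    infDist (c • x) K = c * infDist x K := by
  have hK : c • (K : Set E) = K := by
    ext y
    rw [mem_smul_set_iff_inv_smul_mem₀ hc.ne', SetLike.mem_coe, SetLike.mem_coe,
      K.smul_mem_iff (inv_pos.2 hc)]
  conv_lhs => rw [← hK]
  rw [infDist_smul₀ hc.ne', Real.norm_of_nonneg hc.le]

lemma infDist_add_le (x y : E) : infDist (x + y) K ≤ infDist x K + infDist y K := by
  rcases (K : Set E).eq_empty_or_nonempty with hK | hK
  · simp [hK]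
  have h : ∀ p ∈ (K : Set E), infDist (x + y) K - dist x p ≤ infDist y K := fun p hp => by
    refine (le_infDist hK).2 fun q hq => ?_
    have := (infDist_le_dist_of_mem (K.add_mem hp hq)).trans (dist_add_add_le x y p q)
    linarith
  have := (le_infDist hK).2 fun p hp => (sub_le_comm.1 (h p hp))
  linarith

lemma isSublinear_infDist : IsSublinear (infDist · (K : Set E)) where
  map_smul_of_pos _ hc x := K.infDist_smul_of_pos hc x
  map_add_le := K.infDist_add_le

end ConvexCone

lemma eventually_nhds_exists_mem_and_mem {ι X : Type*} [Finite ι] [TopologicalSpace X]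
    {C : ι → Set X} (hC : ∀ i, IsClosed (C i)) (hcov : ⋃ i, C i = univ) (x : X) :
    ∀ᶠ y in 𝓝 x, ∃ i, x ∈ C i ∧ y ∈ C i := by
  have hopen : IsOpen (⋃ i ∈ {i | x ∉ C i}, C i)ᶜ :=
    ((toFinite _).isClosed_biUnion fun i _ => hC i).isOpen_compl
  have hx : x ∈ (⋃ i ∈ {i | x ∉ C i}, C i)ᶜ := by simp
  filter_upwards [hopen.mem_nhds hx] with y hy
  obtain ⟨i, hi⟩ := mem_iUnion.1 (hcov ▸ mem_univ y)
  exact ⟨i, by_contra fun hxi => hy (mem_biUnion hxi hi), hi⟩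

lemma sub_le_mul_norm_sub_of_eventually {E : Type*} [NormedAddCommGroup E] [NormedSpace ℝ E]
    {f : E → ℝ} (hf : Continuous f) {M : ℝ} (h : ∀ x, ∀ᶠ y in 𝓝 x, f y - f x ≤ M * ‖y - x‖)
    (x y : E) : f y - f x ≤ M * ‖y - x‖ := by
  set z : ℝ → E := fun t => x + t • (y - x)
  have hz : Continuous z := by fun_prop
  have hz_sub : ∀ s t, z s - z t = (s - t) • (y - x) := fun s t => by
    simp only [z, sub_smul]
    abel
  have hbound : ∀ t ∈ Ico (0 : ℝ) 1, ∀ r, M * ‖y - x‖ < r →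
      ∃ᶠ s in 𝓝[>] t, slope (f ∘ z) t s < r := fun t _ r hr => by
    refine Eventually.frequently ?_
    filter_upwards [nhdsWithin_le_nhds ((hz.tendsto t).eventually (h (z t))),
      self_mem_nhdsWithin] with s hs (hts : t < s)
    rw [hz_sub, norm_smul, Real.norm_of_nonneg (sub_pos.2 hts).le] at hs
    rw [slope_def_field, div_lt_iff₀ (sub_pos.2 hts)]
    have := mul_lt_mul_of_pos_right hr (sub_pos.2 hts)
    simp only [Function.comp_apply]
    linarith
  have key := image_le_of_liminf_slope_right_le_deriv_boundary (hf.comp hz).continuousOn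
    (B := fun t => f x + M * ‖y - x‖ * t) (by simp [z]) (by fun_prop)
    (fun t _ => (((hasDerivAt_id t).const_mul _).const_add _).hasDerivWithinAt)
    (by simpa using hbound) (right_mem_Icc.2 zero_le_one)
  simp only [Function.comp_apply, z, one_smul, add_sub_cancel, mul_one] at key
  linarith

lemma sub_le_mul_norm_sub_of_piecewise {ι E : Type*} [Finite ι] [NormedAddCommGroup E]
    [NormedSpace ℝ E] {C : ι → Set E} {L : ι → E →ₗ[ℝ] ℝ} {f : E → ℝ} {M : ℝ}
    (hf : Continuous f) (hC : ∀ i, IsClosed (C i)) (hcov : ⋃ i, C i = univ)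
    (hfL : ∀ i, ∀ x ∈ C i, f x = L i x) (hL : ∀ i x, L i x ≤ M * ‖x‖) (x y : E) :
    f y - f x ≤ M * ‖y - x‖ := by
  refine sub_le_mul_norm_sub_of_eventually hf (fun x => ?_) x y
  filter_upwards [eventually_nhds_exists_mem_and_mem hC hcov x] with y ⟨i, hx, hy⟩
  rw [hfL i y hy, hfL i x hx, ← map_sub]
  exact hL i _

lemma exists_nonneg_forall_apply_le_mul_norm {ι E : Type*} [Fintype ι] [NormedAddCommGroup E]
    [NormedSpace ℝ E] [FiniteDimensional ℝ E] (L : ι → E →ₗ[ℝ] ℝ) :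
    ∃ M, 0 ≤ M ∧ ∀ i x, L i x ≤ M * ‖x‖ := by
  refine ⟨∑ i, ‖(L i).toContinuousLinearMap‖, Finset.sum_nonneg fun i _ => norm_nonneg _,
    fun i x => ?_⟩
  calc L i x ≤ ‖(L i).toContinuousLinearMap‖ * ‖x‖ :=
        (le_abs_self _).trans ((L i).toContinuousLinearMap.le_opNorm x)
    _ ≤ (∑ i, ‖(L i).toContinuousLinearMap‖) * ‖x‖ := by
        gcongr
        exact Finset.single_le_sum (f := fun j => ‖(L j).toContinuousLinearMap‖)
          (fun j _ => norm_nonneg _) (Finset.mem_univ i)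

lemma le_add_mul_infDist {E : Type*} [NormedAddCommGroup E] [NormedSpace ℝ E] {f : E → ℝ}
    {L : E →ₗ[ℝ] ℝ} {S : Set E} {M : ℝ} (hS : S.Nonempty) (hM : 0 ≤ M)
    (hf : ∀ x y, f y - f x ≤ M * ‖y - x‖) (hL : ∀ x, L x ≤ M * ‖x‖) (hfS : ∀ p ∈ S, f p = L p)
    (x : E) : f x ≤ L x + 2 * M * infDist x S := by
  have : Nonempty S := hS.to_subtype
  suffices f x - L x ≤ 2 * M * infDist x S by linarith
  rw [infDist_eq_iInf, Real.mul_iInf_of_nonneg (by positivity)]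
  refine le_ciInf fun ⟨p, hp⟩ => ?_
  have hLp := hL (p - x)
  rw [map_sub, ← hfS p hp, norm_sub_rev] at hLp
  rw [dist_eq_norm]
  linarith [hf p x]

lemma exists_isSublinear_ge_of_eqOn_convexCone {E : Type*} [NormedAddCommGroup E]
    [NormedSpace ℝ E] {f : E → ℝ} {L : E →ₗ[ℝ] ℝ} {K : ConvexCone ℝ E} {M : ℝ}
    (hK : K.Pointed) (hM : 0 ≤ M) (hf : ∀ x y, f y - f x ≤ M * ‖y - x‖)
    (hL : ∀ x, L x ≤ M * ‖x‖) (hfK : ∀ x ∈ K, f x = L x) :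
    ∃ g : E → ℝ, IsSublinear g ∧ (∀ x, g x ≤ 3 * M * ‖x‖) ∧ (∀ x, f x ≤ g x) ∧
      ∀ x ∈ K, g x = f x := by
  refine ⟨fun x => L x + 2 * M * infDist x K,
    L.isSublinear.add (K.isSublinear_infDist.const_mul (by positivity)), fun x => ?_,
    le_add_mul_infDist ⟨0, hK⟩ hM hf hL hfK, fun x hx => ?_⟩
  · have := infDist_le_dist_of_mem (x := x) hK
    rw [dist_zero_right] at this
    nlinarith [hL x]
  · simp [infDist_zero_of_mem (SetLike.mem_coe.2 hx), hfK x hx]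

def Convex.insertZeroCone {E : Type*} [AddCommGroup E] [Module ℝ E] {C : Set E}
    (hC : Convex ℝ C) (hsmul : ∀ t : ℝ, 0 < t → ∀ x ∈ C, t • x ∈ C) : ConvexCone ℝ E where
  carrier := insert 0 C
  smul_mem' c hc x := by
    rintro (rfl | hx)
    · exact (smul_zero (A := E) c).symm ▸ mem_insert 0 C
    · exact mem_insert_of_mem _ (hsmul c hc x hx)
  add_mem' x := by
    rintro (rfl | hx) y (rfl | hy)
    · exact (add_zero (0 : E)).symm ▸ mem_insert 0 C
    · exact (zero_add y).symm ▸ mem_insert_of_mem 0 hy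
    · exact (add_zero x).symm ▸ mem_insert_of_mem 0 hx
    · have h := hsmul 2 two_pos _ (hC hx hy (by norm_num : (0 : ℝ) ≤ 1 / 2)
        (by norm_num : (0 : ℝ) ≤ 1 / 2) (by norm_num))
      rw [smul_add, smul_smul, smul_smul, mul_one_div_cancel two_ne_zero, one_smul, one_smul] at h
      exact mem_insert_of_mem _ h

lemma exists_isConvexBody_le_suppFn_of_eqOn {n : ℕ} {f : Eucl n → ℝ} {L : Eucl n →ₗ[ℝ] ℝ}
    {C : Set (Eucl n)} {M : ℝ} (hC : Convex ℝ C) (hsmul : ∀ t : ℝ, 0 < t → ∀ x ∈ C, t • x ∈ C)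
    (hM : 0 ≤ M) (hf : ∀ x y, f y - f x ≤ M * ‖y - x‖) (hL : ∀ x, L x ≤ M * ‖x‖) (hf0 : f 0 = 0)
    (hfC : ∀ x ∈ C, f x = L x) :
    ∃ B, IsConvexBody B ∧ (∀ x, f x ≤ suppFn B x) ∧ ∀ x ∈ C, suppFn B x = f x := by
  have hfK : ∀ x ∈ hC.insertZeroCone hsmul, f x = L x := by
    rintro x (rfl | hx)
    · rw [hf0, map_zero]
    · exact hfC x hx
  obtain ⟨g, hg, hgM, hfg, hgf⟩ :=
    exists_isSublinear_ge_of_eqOn_convexCone (K := hC.insertZeroCone hsmul) (mem_insert 0 C)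
      hM hf hL hfK
  obtain ⟨B, hB, hBg⟩ := hg.exists_isConvexBody_suppFn_eq hgM
  exact ⟨B, hB, fun x => (hBg x).symm ▸ hfg x,
    fun x hx => (hBg x).trans (hgf x (mem_insert_of_mem 0 hx))⟩

/-- Every piecewise linear function on `ℝ^n` is a pointwise minimum of finitely
many support functions of convex bodies. -/
theorem piecewise_linear_is_min_of_support_functions (n : ℕ) (f : Eucl n → ℝ)
    (hf : IsPiecewiseLinear f) :
    ∃ (m : ℕ) (K : Fin (m + 1) → Set (Eucl n)),
      (∀ i, IsConvexBody (K i)) ∧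
      ∀ x : Eucl n, f x = ⨅ i, suppFn (K i) x := by
  obtain ⟨hfc, m, C, L, hCcl, hCconv, hCcone, -, hCun, hfL⟩ := hf
  have hcover : ∀ x, ∃ i, x ∈ C i := fun x => mem_iUnion.1 (hCun ▸ mem_univ x)
  obtain ⟨i₀, hi₀⟩ := hcover 0
  have hf0 : f 0 = 0 := by rw [hfL i₀ 0 hi₀, map_zero]
  obtain ⟨M, hM, hL⟩ := exists_nonneg_forall_apply_le_mul_norm L
  have hlip := sub_le_mul_norm_sub_of_piecewise hfc hCcl hCun hfL hL
  choose B hB hfB hBf using fun i => exists_isConvexBody_le_suppFn_of_eqOn (hCconv i)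
    (fun t ht => hCcone i t ht.le) hM hlip (hL i) hf0 (hfL i)
  cases m with
  | zero => exact i₀.elim0
  | succ m =>
    refine ⟨m, B, hB, fun x => le_antisymm (le_ciInf fun i => hfB i x) ?_⟩
    obtain ⟨i, hi⟩ := hcover x
    exact (ciInf_le (Finite.bddBelow_range _) i).trans (hBf i x hi).le

end
end

section
/- Let n ≥ 2 and let u ∈ C¹(S^{n−1}) be a continuously differentiable real-valued function on the sphere. Then there exists a sequence f_i of restrictions to S^{n−1} of piecewise linear functions on ℝ^n such that f_i τ-converges to u as i → ∞. -/
open MeasureTheory Filter Topology Metric Set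
open scoped InnerProductSpace ENNReal NNReal Pointwise

noncomputable section

/-- The unit sphere `S^{n-1} ⊆ ℝ^n`. -/
abbrev Sph (n : ℕ) := Metric.sphere (0 : Eucl n) 1

/-- The Hausdorff measure `H^{n-1}` on the unit sphere of `ℝ^n`. -/
def sphMeasure (n : ℕ) : Measure (Sph n) := μH[(n : ℝ) - 1]

open Classical in
/-- The 1-homogeneous extension of a function on the sphere to `ℝ^n`. -/
def homExt {n : ℕ} (u : Sph n → ℝ) (x : Eucl n) : ℝ :=
  if hx : x = 0 then 0
  else ‖x‖ * u ⟨‖x‖⁻¹ • x, by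
    rw [mem_sphere_zero_iff_norm, norm_smul, norm_inv, norm_norm,
      inv_mul_cancel₀ (norm_ne_zero_iff.mpr hx)]⟩

/-- `u` is differentiable at `x ∈ S^{n-1}` (as a function on the sphere): its
1-homogeneous extension is differentiable at `x`. -/
def SphDiffAt {n : ℕ} (u : Sph n → ℝ) (x : Sph n) : Prop :=
  DifferentiableAt ℝ (homExt u) (x : Eucl n)

/-- The spherical gradient of `u` at `x ∈ S^{n-1}`: the gradient of the
1-homogeneous extension minus its radial component.  It is the tangent vector
to the sphere representing the differential of `u` at `x`. -/
def sphGrad {n : ℕ} (u : Sph n → ℝ) (x : Sph n) : Eucl n :=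
  gradient (homExt u) (x : Eucl n) - u x • (x : Eucl n)

/-- `u : S^{n-1} → ℝ` is Lipschitz. -/
def IsLip {n : ℕ} (u : Sph n → ℝ) : Prop := ∃ L : ℝ≥0, LipschitzWith L u

/-- τ-convergence of a sequence of functions on the sphere: uniform convergence,
`H^{n-1}`-a.e. convergence of the spherical gradients, and a uniform a.e. bound
on the norms of the spherical gradients. -/
def TauTendsto {n : ℕ} (u_ : ℕ → Sph n → ℝ) (u : Sph n → ℝ) : Prop :=
  TendstoUniformly u_ u atTop ∧
  (∀ᵐ x ∂sphMeasure n, Tendsto (fun i => sphGrad (u_ i) x) atTop (𝓝 (sphGrad u x))) ∧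
  ∃ C : ℝ, 0 < C ∧ ∀ i, ∀ᵐ x ∂sphMeasure n, ‖sphGrad (u_ i) x‖ ≤ C

/-- `μ` is a valuation on `Lip(S^{n-1})`: it is finitely additive with respect to
pointwise maximum and minimum of Lipschitz functions. -/
def IsValuation {n : ℕ} (μ : (Sph n → ℝ) → ℝ) : Prop :=
  ∀ u v : Sph n → ℝ, IsLip u → IsLip v → μ (u ⊔ v) + μ (u ⊓ v) = μ u + μ v

/-- `μ` is continuous on `Lip(S^{n-1})` with respect to τ-convergence. -/
def TauContinuous {n : ℕ} (μ : (Sph n → ℝ) → ℝ) : Prop :=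
  ∀ (u_ : ℕ → Sph n → ℝ) (u : Sph n → ℝ), (∀ i, IsLip (u_ i)) → IsLip u →
    TauTendsto u_ u → Tendsto (fun i => μ (u_ i)) atTop (𝓝 (μ u))

/-- A rotation `φ ∈ O(n)` acting on the sphere. -/
def sphMap {n : ℕ} (φ : Eucl n ≃ₗᵢ[ℝ] Eucl n) (x : Sph n) : Sph n :=
  ⟨φ x, by
    rw [mem_sphere_zero_iff_norm, φ.norm_map]
    exact mem_sphere_zero_iff_norm.mp x.2⟩

/-- `μ` is rotation invariant: `μ (u ∘ φ) = μ u` for every `φ ∈ O(n)`. -/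
def RotationInvariant {n : ℕ} (μ : (Sph n → ℝ) → ℝ) : Prop :=
  ∀ u : Sph n → ℝ, IsLip u → ∀ φ : Eucl n ≃ₗᵢ[ℝ] Eucl n, μ (u ∘ sphMap φ) = μ u

/-- `μ` is dot product invariant: invariant under adding restrictions to the
sphere of linear functions `⟨·, y⟩`. -/
def DotProductInvariant {n : ℕ} (μ : (Sph n → ℝ) → ℝ) : Prop :=
  ∀ u : Sph n → ℝ, IsLip u → ∀ y : Eucl n,
    μ (fun x => u x + ⟪(x : Eucl n), y⟫_ℝ) = μ u

/-- `μ` is homogeneous of degree `i`. -/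
def IsHomogeneous {n : ℕ} (μ : (Sph n → ℝ) → ℝ) (i : ℕ) : Prop :=
  ∀ u : Sph n → ℝ, IsLip u → ∀ lam : ℝ, 0 < lam →
    μ (fun x => lam * u x) = lam ^ i * μ u

/-- `h` belongs to `𝓗(S^{n-1})`: `h` is the restriction to the sphere of the
support function of some convex body. -/
def IsSuppRestriction {n : ℕ} (h : Sph n → ℝ) : Prop :=
  ∃ K : Set (Eucl n), IsConvexBody K ∧ ∀ x : Sph n, h x = suppFn K (x : Eucl n)

/-!
Let `F` be the 1-homogeneous extension of `u`. Mollifying a cutoff of `F` gives a `C²` function `H`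
that is `C¹`-close to `F` on the sphere `S`; by Euler's identity `H z - DH z z` is then small on
`S`. For `z ∈ S` let `ℓ_z` be the linear function agreeing with `H` at `z` to first order along
`S`. For `c` large, `H + c` exceeds `ℓ_z + c ⟪·, z⟫` on `S` by a quantity comparable to `‖x - z‖²`,
and `c` exceeds `c ⟪·, z⟫` by exactly `c ‖x - z‖² / 2`. Hence over a fine finite net `Z ⊆ S`,
`f = max_z (ℓ_z + c ⟪·, z⟫) - max_z c ⟪·, z⟫` is uniformly close to `F` on `S`, and it is piecewise
linear. Off finitely many great spheres, a null set, each maximum is attained by a single vector,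
coming from net points `z, z'` that must lie close to `x`; there
`∇f(x) = ∇H(z) + (H z - DH z z) z + c (z - z')`, which is close to `∇F(x)`.
-/

open scoped Gradient

namespace SphereApprox

section Euler

variable {E : Type*} [NormedAddCommGroup E] [NormedSpace ℝ E]

lemma fderiv_apply_self_of_homogeneous {f : E → ℝ} {x : E}
    (hf : ∀ t : ℝ, 0 < t → f (t • x) = t * f x) (hd : DifferentiableAt ℝ f x) :
    fderiv ℝ f x x = f x := by
  have hchain : HasDerivAt (fun t : ℝ => f (t • x)) (fderiv ℝ f x x) 1 :=
    hd.hasFDerivAt.comp_hasDerivAt_of_eq (1 : ℝ)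
      (by simpa using (hasDerivAt_id (1 : ℝ)).smul_const x) (one_smul ℝ x).symm
  have hlin : HasDerivAt (fun t : ℝ => f (t • x)) (f x) 1 := by
    refine (by simpa using (hasDerivAt_id (1 : ℝ)).mul_const (f x) :
      HasDerivAt (fun t : ℝ => t * f x) (f x) 1).congr_of_eventuallyEq ?_
    filter_upwards [eventually_gt_nhds one_pos] with t ht using hf t ht
  exact hchain.unique hlin

lemma abs_sub_fderiv_apply_self_le {H F : E → ℝ} {z : E} (hz : ‖z‖ = 1)
    (hF : ∀ t : ℝ, 0 < t → F (t • z) = t * F z) (hFz : DifferentiableAt ℝ F z) :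
    |H z - fderiv ℝ H z z| ≤ |H z - F z| + ‖fderiv ℝ H z - fderiv ℝ F z‖ := by
  have hsplit : H z - fderiv ℝ H z z = (H z - F z) - (fderiv ℝ H z - fderiv ℝ F z) z := by
    rw [sub_apply, fderiv_apply_self_of_homogeneous hF hFz]; ring
  rw [hsplit]
  refine (abs_sub _ _).trans (add_le_add le_rfl ?_)
  simpa [hz] using (fderiv ℝ H z - fderiv ℝ F z).le_opNorm z

end Euler

section Taylor

variable {E F : Type*} [NormedAddCommGroup E] [NormedSpace ℝ E] [NormedAddCommGroup F]
  [NormedSpace ℝ F]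

lemma norm_sub_sub_fderiv_le {f : E → F} (hf : ContDiff ℝ 2 f) {s : Set E} (hs : Convex ℝ s)
    {M : ℝ} (hM : ∀ p ∈ s, ‖fderiv ℝ (fderiv ℝ f) p‖ ≤ M) {x z : E} (hx : x ∈ s) (hz : z ∈ s) :
    ‖f x - f z - fderiv ℝ f z (x - z)‖ ≤ M * ‖x - z‖ ^ 2 := by
  have hM₀ : 0 ≤ M := (norm_nonneg (fderiv ℝ (fderiv ℝ f) z)).trans (hM z hz)
  have hDf : ContDiff ℝ 1 (fderiv ℝ f) := hf.fderiv_right (by norm_num)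
  have hseg : ∀ p ∈ segment ℝ z x, ‖fderiv ℝ f p - fderiv ℝ f z‖ ≤ M * ‖x - z‖ := by
    intro p hp
    have hpz : ‖p - z‖ ≤ ‖x - z‖ := by
      simp only [← dist_eq_norm, dist_comm _ z]
      linarith [dist_add_dist_of_mem_segment hp, dist_nonneg (x := p) (y := x)]
    calc ‖fderiv ℝ f p - fderiv ℝ f z‖ ≤ M * ‖p - z‖ :=
          hs.norm_image_sub_le_of_norm_fderiv_le (fun q _ => hDf.differentiable one_ne_zero q)
            hM hz (hs.segment_subset hz hx hp)
      _ ≤ M * ‖x - z‖ := by gcongr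
  calc ‖f x - f z - fderiv ℝ f z (x - z)‖ ≤ M * ‖x - z‖ * ‖x - z‖ :=
        (convex_segment z x).norm_image_sub_le_of_norm_fderiv_le'
          (fun q _ => hf.differentiable two_ne_zero q) hseg (left_mem_segment ℝ z x)
          (right_mem_segment ℝ z x)
    _ = M * ‖x - z‖ ^ 2 := by ring

end Taylor

section Smoothing

variable {E : Type*} [NormedAddCommGroup E] [InnerProductSpace ℝ E] [FiniteDimensional ℝ E]

/-- Multiply by a smooth cutoff that is `1` on the annulus `1/4 ≤ ‖x‖ ≤ 2` and vanishes near `0`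
and outside the ball of radius `3`. -/
lemma exists_contDiff_hasCompactSupport_eventuallyEq {F : E → ℝ}
    (hF : ContDiffOn ℝ 1 F {0}ᶜ) :
    ∃ G : E → ℝ, ContDiff ℝ 1 G ∧ HasCompactSupport G ∧ ∀ x : E, ‖x‖ = 1 → G =ᶠ[𝓝 x] F := by
  let B₁ : ContDiffBump (0 : E) := ⟨2, 3, by norm_num, by norm_num⟩
  let B₂ : ContDiffBump (0 : E) := ⟨8⁻¹, 4⁻¹, by norm_num, by norm_num⟩
  have hχ : ContDiff ℝ 1 fun x => B₁ x * (1 - B₂ x) :=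
    B₁.contDiff.mul (contDiff_const.sub B₂.contDiff)
  refine ⟨fun x => B₁ x * (1 - B₂ x) * F x, contDiff_iff_contDiffAt.mpr fun x => ?_, ?_, ?_⟩
  · rcases eq_or_ne x 0 with rfl | hx
    · refine contDiffAt_const (c := (0 : ℝ)).congr_of_eventuallyEq ?_
      filter_upwards [closedBall_mem_nhds (0 : E) (by norm_num : (0 : ℝ) < 8⁻¹)] with y hy
      simp [B₂.one_of_mem_closedBall hy]
    · exact hχ.contDiffAt.mul (hF.contDiffAt (isOpen_compl_singleton.mem_nhds hx))
  · refine HasCompactSupport.intro (isCompact_closedBall (0 : E) 3) fun x hx => ?_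
    have : B₁.rOut ≤ dist x 0 := (not_le.mp hx).le
    simp [B₁.zero_of_le_dist this]
  · intro x hx
    have hann : IsOpen {y : E | 4⁻¹ < ‖y‖ ∧ ‖y‖ < 2} :=
      (isOpen_lt continuous_const continuous_norm).inter
        (isOpen_lt continuous_norm continuous_const)
    filter_upwards [hann.mem_nhds (by norm_num [hx])] with y ⟨hy₁, hy₂⟩
    have h₁ : B₁ y = 1 := B₁.one_of_mem_closedBall (by simpa using hy₂.le)
    have h₂ : B₂ y = 0 := B₂.zero_of_le_dist (by simpa using hy₁.le)
    simp [h₁, h₂]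

/-- Mollification by a bump function of radius `δ` moves `G` and `fderiv ℝ G` by at most their
moduli of continuity at scale `δ`. -/
lemma exists_contDiff_two_approx_of_hasCompactSupport {G : E → ℝ} (hG : ContDiff ℝ 1 G)
    (hGc : HasCompactSupport G) {ε : ℝ} (hε : 0 < ε) :
    ∃ H : E → ℝ, ContDiff ℝ 2 H ∧
      ∀ x, |H x - G x| ≤ ε ∧ ‖fderiv ℝ H x - fderiv ℝ G x‖ ≤ ε := by
  borelize E
  have hDG : Continuous (fderiv ℝ G) := hG.continuous_fderiv one_ne_zero
  obtain ⟨δ₁, hδ₁, hmod₁⟩ := Metric.uniformContinuous_iff.mp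
    (hGc.uniformContinuous_of_continuous hG.continuous) ε hε
  obtain ⟨δ₂, hδ₂, hmod₂⟩ := Metric.uniformContinuous_iff.mp
    ((hGc.fderiv ℝ).uniformContinuous_of_continuous hDG) ε hε
  let φ : ContDiffBump (0 : E) := ⟨min δ₁ δ₂ / 2, min δ₁ δ₂, by positivity, by
    linarith [lt_min hδ₁ hδ₂]⟩
  have hball : ∀ x : E, ∀ y ∈ ball x φ.rOut, dist y x < δ₁ ∧ dist y x < δ₂ := fun x y hy =>
    lt_min_iff.mp (mem_ball.mp hy)
  refine ⟨convolution (φ.normed volume) G (ContinuousLinearMap.lsmul ℝ ℝ) volume, ?_,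
    fun x => ⟨?_, ?_⟩⟩
  · exact φ.hasCompactSupport_normed.contDiff_convolution_left _ φ.contDiff_normed
      hG.continuous.locallyIntegrable
  · rw [← Real.dist_eq]
    exact φ.dist_normed_convolution_le hG.continuous.aestronglyMeasurable
      fun y hy => (hmod₁ (hball x y hy).1).le
  · have hder := hGc.hasFDerivAt_convolution_right (ContinuousLinearMap.lsmul ℝ ℝ)
      ((φ.continuous_normed (μ := volume)).locallyIntegrable (μ := volume)) hG x
    have hL : (ContinuousLinearMap.lsmul ℝ ℝ).precompR E = (ContinuousLinearMap.lsmul ℝ ℝ :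
        ℝ →L[ℝ] (E →L[ℝ] ℝ) →L[ℝ] (E →L[ℝ] ℝ)) := by
      ext; simp [ContinuousLinearMap.precompR]
    rw [hder.fderiv, hL, ← dist_eq_norm]
    exact φ.dist_normed_convolution_le hDG.aestronglyMeasurable
      fun y hy => (hmod₂ (hball x y hy).2).le

lemma exists_contDiff_two_approx_on_sphere {F : E → ℝ} (hF : ContDiffOn ℝ 1 F {0}ᶜ) {ε : ℝ}
    (hε : 0 < ε) :
    ∃ H : E → ℝ, ContDiff ℝ 2 H ∧
      ∀ x, ‖x‖ = 1 → |H x - F x| ≤ ε ∧ ‖fderiv ℝ H x - fderiv ℝ F x‖ ≤ ε := by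
  obtain ⟨G, hG, hGc, hGF⟩ := exists_contDiff_hasCompactSupport_eventuallyEq hF
  obtain ⟨H, hH, hHG⟩ := exists_contDiff_two_approx_of_hasCompactSupport hG hGc hε
  refine ⟨H, hH, fun x hx => ?_⟩
  rw [← (hGF x hx).eq_of_nhds, ← (hGF x hx).fderiv_eq]
  exact hHG x

end Smoothing

section MaxInner

variable {E : Type*} [NormedAddCommGroup E] [InnerProductSpace ℝ E]

lemma hasGradientAt_inner_left [CompleteSpace E] (v x : E) :
    HasGradientAt (fun y => ⟪y, v⟫_ℝ) v x := by
  rw [hasGradientAt_iff_hasFDerivAt]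
  refine ((InnerProductSpace.toDual ℝ E) v).hasFDerivAt.congr_of_eventuallyEq
    (Eventually.of_forall fun y => ?_)
  simp [real_inner_comm]

def maxInner (A : Finset E) (hA : A.Nonempty) (x : E) : ℝ :=
  A.sup' hA fun v => ⟪x, v⟫_ℝ

variable {A : Finset E} {hA : A.Nonempty} {x v : E}

lemma inner_le_maxInner (hv : v ∈ A) : ⟪x, v⟫_ℝ ≤ maxInner A hA x :=
  Finset.le_sup' (fun v => ⟪x, v⟫_ℝ) hv

lemma maxInner_le {c : ℝ} (h : ∀ v ∈ A, ⟪x, v⟫_ℝ ≤ c) : maxInner A hA x ≤ c :=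
  Finset.sup'_le _ _ h

lemma exists_inner_eq_maxInner (A : Finset E) (hA : A.Nonempty) (x : E) :
    ∃ v ∈ A, ⟪x, v⟫_ℝ = maxInner A hA x := by
  obtain ⟨v, hv, h⟩ := Finset.exists_mem_eq_sup' hA fun v => ⟪x, v⟫_ℝ
  exact ⟨v, hv, h.symm⟩

lemma continuous_maxInner (A : Finset E) (hA : A.Nonempty) : Continuous (maxInner A hA) :=
  Continuous.finset_sup'_apply hA fun _ _ => continuous_id.inner continuous_const

lemma maxInner_smul {t : ℝ} (ht : 0 ≤ t) (x : E) :
    maxInner A hA (t • x) = t * maxInner A hA x := by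
  refine le_antisymm (maxInner_le fun v hv => ?_) ?_
  · rw [real_inner_smul_left]
    exact mul_le_mul_of_nonneg_left (inner_le_maxInner hv) ht
  · obtain ⟨v, hv, hmax⟩ := exists_inner_eq_maxInner A hA x
    rw [← hmax, ← real_inner_smul_left]
    exact inner_le_maxInner hv

lemma maxInner_eventuallyEq (hv : v ∈ A) (hmax : ⟪x, v⟫_ℝ = maxInner A hA x)
    (hinj : Set.InjOn (fun w => ⟪x, w⟫_ℝ) A) :
    maxInner A hA =ᶠ[𝓝 x] fun y => ⟪y, v⟫_ℝ := by
  have hlocal : ∀ w ∈ A, ∀ᶠ y in 𝓝 x, ⟪y, w⟫_ℝ ≤ ⟪y, v⟫_ℝ := by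
    intro w hw
    rcases eq_or_ne w v with rfl | hne
    · exact Eventually.of_forall fun _ => le_rfl
    have hlt : ⟪x, w⟫_ℝ < ⟪x, v⟫_ℝ :=
      (hmax ▸ inner_le_maxInner hw).lt_of_ne fun h => hne (hinj hw hv h)
    exact ((continuous_id.inner continuous_const).continuousAt.eventually_lt
      (continuous_id.inner continuous_const).continuousAt hlt).mono fun _ => le_of_lt
  filter_upwards [(Filter.eventually_all_finset A).mpr hlocal] with y hy
  exact le_antisymm (maxInner_le hy) (inner_le_maxInner hv)

lemma hasGradientAt_maxInner [CompleteSpace E] (hv : v ∈ A)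
    (hmax : ⟪x, v⟫_ℝ = maxInner A hA x) (hinj : Set.InjOn (fun w => ⟪x, w⟫_ℝ) A) :
    HasGradientAt (maxInner A hA) v x :=
  (hasGradientAt_inner_left v x).congr_of_eventuallyEq (maxInner_eventuallyEq hv hmax hinj)

end MaxInner

section MaxCone

variable {E : Type*} [NormedAddCommGroup E] [InnerProductSpace ℝ E]

def maxCone (A : Finset E) (v : E) : Set E := {x | ∀ w ∈ A, ⟪x, w⟫_ℝ ≤ ⟪x, v⟫_ℝ}

lemma isClosed_maxCone (A : Finset E) (v : E) : IsClosed (maxCone A v) := by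
  simp only [maxCone, Set.ofPred_forall]
  exact isClosed_biInter fun w _ =>
    isClosed_le (continuous_id.inner continuous_const) (continuous_id.inner continuous_const)

lemma convex_maxCone (A : Finset E) (v : E) : Convex ℝ (maxCone A v) := by
  intro x hx y hy s t hs ht _ w hw
  simp only [inner_add_left, real_inner_smul_left]
  exact add_le_add (mul_le_mul_of_nonneg_left (hx w hw) hs)
    (mul_le_mul_of_nonneg_left (hy w hw) ht)

lemma smul_mem_maxCone {A : Finset E} {v x : E} (hx : x ∈ maxCone A v) {t : ℝ} (ht : 0 ≤ t) :
    t • x ∈ maxCone A v := fun w hw => by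
  simp only [real_inner_smul_left]
  exact mul_le_mul_of_nonneg_left (hx w hw) ht

lemma maxInner_eq_of_mem_maxCone {A : Finset E} (hA : A.Nonempty) {v x : E} (hv : v ∈ A)
    (hx : x ∈ maxCone A v) : maxInner A hA x = ⟪x, v⟫_ℝ :=
  le_antisymm (maxInner_le hx) (inner_le_maxInner hv)

/-- Two cones of maximality meet inside the hyperplane `⟪x, v - v'⟫ = 0`, which has empty
interior. -/
lemma interior_maxCone_inter_interior_maxCone {A : Finset E} {v v' : E} (hv : v ∈ A)
    (hv' : v' ∈ A) (hne : v ≠ v') : interior (maxCone A v) ∩ interior (maxCone A v') = ∅ := by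
  set K := LinearMap.ker (innerₛₗ ℝ (v - v'))
  have hsub : interior (maxCone A v) ∩ interior (maxCone A v') ⊆ interior K := by
    refine interior_maximal (fun x hx => ?_) (isOpen_interior.inter isOpen_interior)
    have h1 := interior_subset hx.1 v' hv'
    have h2 := interior_subset hx.2 v hv
    simp only [SetLike.mem_coe, K, LinearMap.mem_ker, innerₛₗ_apply_apply, inner_sub_left]
    rw [real_inner_comm x v, real_inner_comm x v']
    linarith
  refine Set.eq_empty_of_subset_empty fun x hx => hne ?_
  have hK : K = ⊤ := K.eq_top_of_nonempty_interior' ⟨x, hsub hx⟩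
  have h : ⟪v - v', v - v'⟫_ℝ = 0 := LinearMap.mem_ker.mp (hK ▸ Submodule.mem_top : v - v' ∈ K)
  exact sub_eq_zero.mp (inner_self_eq_zero.mp h)

end MaxCone

section TangentVec

variable {E : Type*} [NormedAddCommGroup E] [InnerProductSpace ℝ E]

lemma norm_sub_sq_eq_two_mul_one_sub_inner {x z : E} (hx : ‖x‖ = 1) (hz : ‖z‖ = 1) :
    ‖x - z‖ ^ 2 = 2 * (1 - ⟪x, z⟫_ℝ) := by
  rw [norm_sub_sq_real, hx, hz]; ring

variable [CompleteSpace E]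

lemma norm_gradient_sub_gradient (f g : E → ℝ) (x : E) :
    ‖∇ f x - ∇ g x‖ = ‖fderiv ℝ f x - fderiv ℝ g x‖ := by
  rw [gradient, gradient, ← map_sub, LinearIsometryEquiv.norm_map]

/-- `x ↦ ⟪x, tangentVec H z⟫` is the linear function that agrees with `H` at `z ∈ S` and has the
same tangential derivative there. -/
def tangentVec (H : E → ℝ) (z : E) : E :=
  ∇ H z + (H z - fderiv ℝ H z z) • z

lemma sub_inner_tangentVec (H : E → ℝ) {x z : E} (hx : ‖x‖ = 1) (hz : ‖z‖ = 1) :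
    H x - ⟪x, tangentVec H z⟫_ℝ =
      (H x - H z - fderiv ℝ H z (x - z)) + (H z - fderiv ℝ H z z) * (‖x - z‖ ^ 2 / 2) := by
  rw [tangentVec, inner_add_right, real_inner_smul_right, inner_gradient_right,
    norm_sub_sq_eq_two_mul_one_sub_inner hx hz, map_sub]
  simp only [conj_trivial]
  ring

lemma exists_abs_sub_inner_tangentVec_le [FiniteDimensional ℝ E] {H : E → ℝ}
    (hH : ContDiff ℝ 2 H) {κ : ℝ} (hκ : ∀ z : E, ‖z‖ = 1 → |H z - fderiv ℝ H z z| ≤ κ) :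
    ∃ K, 0 ≤ K ∧ ∀ x z : E, ‖x‖ = 1 → ‖z‖ = 1 →
      |H x - ⟪x, tangentVec H z⟫_ℝ| ≤ K * ‖x - z‖ ^ 2 := by
  obtain ⟨M, hM⟩ := (isCompact_closedBall (0 : E) 1).exists_bound_of_continuousOn
    ((hH.fderiv_right (m := 1) (by norm_num)).continuous_fderiv one_ne_zero).continuousOn
  refine ⟨max M 0 + max κ 0 / 2, by positivity, fun x z hx hz => ?_⟩
  have hT := norm_sub_sub_fderiv_le hH (convex_closedBall 0 1)
    (fun p hp => (hM p hp).trans (le_max_left M 0)) (mem_closedBall_zero_iff.mpr hx.le)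
    (mem_closedBall_zero_iff.mpr hz.le)
  rw [Real.norm_eq_abs] at hT
  obtain ⟨hT₁, hT₂⟩ := abs_le.mp hT
  obtain ⟨hκ₁, hκ₂⟩ := abs_le.mp ((hκ z hz).trans (le_max_left κ 0))
  have hr := sq_nonneg ‖x - z‖
  rw [sub_inner_tangentVec H hx hz, abs_le]
  constructor <;> nlinarith

lemma abs_sub_inner_tangentVec_add_smul_le {H : E → ℝ} {K : ℝ} (c : ℝ) {x z : E}
    (hx : ‖x‖ = 1) (hz : ‖z‖ = 1) (hHK : |H x - ⟪x, tangentVec H z⟫_ℝ| ≤ K * ‖x - z‖ ^ 2) :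
    |H x + c - ⟪x, tangentVec H z + c • z⟫_ℝ - c / 2 * ‖x - z‖ ^ 2| ≤ K * ‖x - z‖ ^ 2 := by
  rw [inner_add_right, real_inner_smul_right]
  convert hHK using 2
  rw [norm_sub_sq_eq_two_mul_one_sub_inner hx hz]
  ring

lemma norm_tangentVec_add_smul_sub_le (H : E → ℝ) {c : ℝ} (hc : 0 ≤ c) {x z z' : E}
    (hz : ‖z‖ = 1) :
    ‖tangentVec H z + c • z - c • z' - ∇ H x‖ ≤
      ‖∇ H z - ∇ H x‖ + |H z - fderiv ℝ H z z| + c * (‖x - z‖ + ‖x - z'‖) := by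
  have hsplit : tangentVec H z + c • z - c • z' - ∇ H x =
      (∇ H z - ∇ H x) + (H z - fderiv ℝ H z z) • z + c • ((x - z') - (x - z)) := by
    rw [tangentVec]; module
  rw [hsplit]
  refine (norm_add₃_le ..).trans ?_
  rw [norm_smul, norm_smul, hz, mul_one, Real.norm_eq_abs, Real.norm_of_nonneg hc]
  gcongr
  exact (norm_sub_le _ _).trans_eq (add_comm _ _)

end TangentVec

section Approximation

variable {E : Type*} [NormedAddCommGroup E] [InnerProductSpace ℝ E]

lemma exists_pos_mul_sq_lt (a : ℝ) {b : ℝ} (hb : 0 < b) : ∃ δ : ℝ, 0 < δ ∧ a * δ ^ 2 < b := by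
  have hcont : Continuous fun δ : ℝ => a * δ ^ 2 := by fun_prop
  obtain ⟨δ, hδb, hδ⟩ := (((hcont.tendsto' 0 0 (by simp)).eventually_lt_const hb).filter_mono
    nhdsWithin_le_nhds |>.and (self_mem_nhdsWithin : Set.Ioi (0 : ℝ) ∈ 𝓝[>] 0)).exists
  exact ⟨δ, hδ, hδb⟩

lemma exists_finset_dense_sphere [ProperSpace E] [Nontrivial E] {δ : ℝ} (hδ : 0 < δ) :
    ∃ Z : Finset E, Z.Nonempty ∧ (∀ z ∈ Z, ‖z‖ = 1) ∧ ∀ x : E, ‖x‖ = 1 → ∃ z ∈ Z, ‖x - z‖ < δ := by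
  obtain ⟨Z, hZ, hcover⟩ := (isCompact_sphere (0 : E) 1).elim_nhds_subcover (fun x => ball x δ)
    fun x _ => ball_mem_nhds x hδ
  have hnet : ∀ x : E, ‖x‖ = 1 → ∃ z ∈ Z, ‖x - z‖ < δ := fun x hx => by
    simpa [dist_eq_norm] using hcover (mem_sphere_zero_iff_norm.mpr hx)
  obtain ⟨x, hx⟩ := (NormedSpace.sphere_nonempty (x := (0 : E)) (r := 1)).mpr zero_le_one
  obtain ⟨z, hz, -⟩ := hnet x (mem_sphere_zero_iff_norm.mp hx)
  exact ⟨Z, ⟨z, hz⟩, fun z hz => mem_sphere_zero_iff_norm.mp (hZ z hz), hnet⟩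

lemma maxInner_image_bounds [DecidableEq E] {Z : Finset E} (hZ : Z.Nonempty) {a : E → E}
    {x : E} {g k K δ : ℝ} (hk : 0 ≤ k) (hK : 0 ≤ K)
    (hquad : ∀ z ∈ Z, k * ‖x - z‖ ^ 2 ≤ g - ⟪x, a z⟫_ℝ ∧ g - ⟪x, a z⟫_ℝ ≤ K * ‖x - z‖ ^ 2)
    (hnet : ∃ z ∈ Z, ‖x - z‖ < δ) :
    g - K * δ ^ 2 ≤ maxInner (Z.image a) (hZ.image a) x ∧
      maxInner (Z.image a) (hZ.image a) x ≤ g ∧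
      ∀ z ∈ Z, ⟪x, a z⟫_ℝ = maxInner (Z.image a) (hZ.image a) x → k * ‖x - z‖ ^ 2 ≤ K * δ ^ 2 := by
  obtain ⟨z₀, hz₀, hxz₀⟩ := hnet
  have hlower : g - K * δ ^ 2 ≤ maxInner (Z.image a) (hZ.image a) x := by
    have := (hquad z₀ hz₀).2
    have : K * ‖x - z₀‖ ^ 2 ≤ K * δ ^ 2 := by gcongr
    linarith [inner_le_maxInner (hA := hZ.image a) (x := x) (Finset.mem_image_of_mem a hz₀)]
  refine ⟨hlower, maxInner_le (Finset.forall_mem_image.mpr fun z hz => ?_), fun z hz hmax => ?_⟩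
  · nlinarith [(hquad z hz).1, sq_nonneg ‖x - z‖]
  · linarith [(hquad z hz).1]

lemma maxInner_tangentVec_sub_bounds [DecidableEq E] [CompleteSpace E] {H : E → ℝ} {K c δ : ℝ}
    (hK : 0 ≤ K) (hc : c = 2 * K + 2)
    (hHK : ∀ x z : E, ‖x‖ = 1 → ‖z‖ = 1 → |H x - ⟪x, tangentVec H z⟫_ℝ| ≤ K * ‖x - z‖ ^ 2)
    {Z : Finset E} (hZ : Z.Nonempty) (hZ₁ : ∀ z ∈ Z, ‖z‖ = 1) {x : E} (hx : ‖x‖ = 1)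
    (hnet : ∃ z ∈ Z, ‖x - z‖ < δ) :
    |maxInner (Z.image fun z => tangentVec H z + c • z) (hZ.image _) x -
        maxInner (Z.image (c • ·)) (hZ.image _) x - H x| ≤ (2 * K + 1 + c / 2) * δ ^ 2 ∧
      (∀ z ∈ Z, ⟪x, tangentVec H z + c • z⟫_ℝ =
        maxInner (Z.image fun z => tangentVec H z + c • z) (hZ.image _) x →
          ‖x - z‖ ^ 2 ≤ (2 * K + 1) * δ ^ 2) ∧
      (∀ z ∈ Z, ⟪x, c • z⟫_ℝ = maxInner (Z.image (c • ·)) (hZ.image _) x →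
        ‖x - z‖ ^ 2 ≤ δ ^ 2) := by
  have hc₀ : 0 < c := by rw [hc]; positivity
  obtain ⟨hA₁, hA₂, hA₃⟩ := maxInner_image_bounds (a := fun z => tangentVec H z + c • z)
    (g := H x + c) (K := 2 * K + 1) hZ zero_le_one (by positivity) (fun z hz => by
    have := abs_le.mp (abs_sub_inner_tangentVec_add_smul_le c hx (hZ₁ z hz) (hHK x z hx (hZ₁ z hz)))
    constructor <;> nlinarith) hnet
  obtain ⟨hB₁, hB₂, hB₃⟩ := maxInner_image_bounds (a := (c • ·)) (g := c) hZ (half_pos hc₀).le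
    (half_pos hc₀).le (fun z hz => by
      rw [real_inner_smul_right, norm_sub_sq_eq_two_mul_one_sub_inner hx (hZ₁ z hz)]
      constructor <;> linarith) hnet
  refine ⟨abs_le.mpr ⟨by linarith, by linarith⟩, fun z hz hmax => by linarith [hA₃ z hz hmax],
    fun z hz hmax => ?_⟩
  exact (mul_le_mul_iff_of_pos_left (half_pos hc₀)).mp (hB₃ z hz hmax)

variable [FiniteDimensional ℝ E] [Nontrivial E]

/-- The vectors `tangentVec H z + c • z` and `c • z` over a fine net `Z` of the sphere: for `c`
large the functions `H + c ‖·‖` and `c ‖·‖` are uniformly convex along the sphere, so both are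
approximated to second order by maxima of their tangent linear functions. -/
lemma exists_maxInner_sub_approx_of_contDiff {H : E → ℝ} (hH : ContDiff ℝ 2 H) {κ : ℝ}
    (hκ : ∀ z : E, ‖z‖ = 1 → |H z - fderiv ℝ H z z| ≤ κ) {ε : ℝ} (hε : 0 < ε) :
    ∃ (A B : Finset E) (hA : A.Nonempty) (hB : B.Nonempty), ∀ x : E, ‖x‖ = 1 →
      |maxInner A hA x - maxInner B hB x - H x| ≤ ε ∧
      ∀ v ∈ A, ∀ w ∈ B, ⟪x, v⟫_ℝ = maxInner A hA x → ⟪x, w⟫_ℝ = maxInner B hB x →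
        ‖v - w - ∇ H x‖ ≤ ε + κ := by
  classical
  obtain ⟨K, hK, hHK⟩ := exists_abs_sub_inner_tangentVec_le hH hκ
  set c := 2 * K + 2 with hc
  have hc₀ : 0 < c := by positivity
  have hgrad : Continuous (∇ H) :=
    (InnerProductSpace.toDual ℝ E).symm.continuous.comp (hH.continuous_fderiv two_ne_zero)
  obtain ⟨r, hr, hmod⟩ := Metric.uniformContinuousOn_iff.mp
    ((isCompact_sphere (0 : E) 1).uniformContinuousOn_of_continuous hgrad.continuousOn)
    (ε / 2) (half_pos hε)
  set ρ := min r (ε / (4 * c))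
  have hρ₀ : 0 < ρ := lt_min hr (by positivity)
  obtain ⟨δ, hδ, hδsmall⟩ := exists_pos_mul_sq_lt (2 * K + 1 + c / 2) (lt_min hε (pow_pos hρ₀ 2))
  have hδε := hδsmall.trans_le (min_le_left ε (ρ ^ 2))
  have hδρ := hδsmall.trans_le (min_le_right ε (ρ ^ 2))
  have hKδ : 0 ≤ 2 * K * δ ^ 2 ∧ 0 ≤ c / 2 * δ ^ 2 := ⟨by positivity, by positivity⟩
  obtain ⟨Z, hZ, hZ₁, hnet⟩ := exists_finset_dense_sphere (E := E) hδ
  refine ⟨_, _, hZ.image fun z => tangentVec H z + c • z, hZ.image (c • ·), fun x hx => ?_⟩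
  obtain ⟨hval, hlocA, hlocB⟩ := maxInner_tangentVec_sub_bounds hK hc hHK hZ hZ₁ hx (hnet x hx)
  refine ⟨hval.trans (by linarith), ?_⟩
  simp only [Finset.forall_mem_image]
  intro z hz z' hz' hzmax hz'max
  have hxz : ‖x - z‖ < ρ :=
    lt_of_pow_lt_pow_left₀ 2 hρ₀.le (by linarith [hlocA z hz hzmax])
  have hxz' : ‖x - z'‖ < ρ :=
    lt_of_pow_lt_pow_left₀ 2 hρ₀.le (by linarith [hlocB z' hz' hz'max])
  have hgz : ‖∇ H z - ∇ H x‖ ≤ ε / 2 := by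
    rw [← dist_eq_norm]
    refine (hmod z (by simpa using hZ₁ z hz) x (by simpa using hx) ?_).le
    rw [dist_comm, dist_eq_norm]; exact hxz.trans_le (min_le_left _ _)
  have hcρ : c * (‖x - z‖ + ‖x - z'‖) ≤ ε / 2 := by
    have : ρ ≤ ε / (4 * c) := min_le_right _ _
    calc c * (‖x - z‖ + ‖x - z'‖) ≤ c * (2 * (ε / (4 * c))) := by gcongr; linarith
      _ = ε / 2 := by field_simp; ring
  calc ‖tangentVec H z + c • z - c • z' - ∇ H x‖
      ≤ ‖∇ H z - ∇ H x‖ + |H z - fderiv ℝ H z z| + c * (‖x - z‖ + ‖x - z'‖) :=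
        norm_tangentVec_add_smul_sub_le H hc₀.le (hZ₁ z hz)
    _ ≤ ε + κ := by linarith [hκ z (hZ₁ z hz)]

lemma exists_maxInner_sub_approx {F : E → ℝ} (hF : ContDiffOn ℝ 1 F {0}ᶜ)
    (hhom : ∀ t : ℝ, 0 < t → ∀ x, F (t • x) = t * F x) {ε : ℝ} (hε : 0 < ε) :
    ∃ (A B : Finset E) (hA : A.Nonempty) (hB : B.Nonempty), ∀ x : E, ‖x‖ = 1 →
      |maxInner A hA x - maxInner B hB x - F x| ≤ ε ∧
      ∀ v ∈ A, ∀ w ∈ B, ⟪x, v⟫_ℝ = maxInner A hA x → ⟪x, w⟫_ℝ = maxInner B hB x →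
        ‖v - w - ∇ F x‖ ≤ ε := by
  have hFd : ∀ x : E, ‖x‖ = 1 → DifferentiableAt ℝ F x := fun x hx =>
    (hF.contDiffAt (isOpen_compl_singleton.mem_nhds (by simp [← norm_ne_zero_iff, hx]))
      ).differentiableAt one_ne_zero
  obtain ⟨H, hH, hHF⟩ := exists_contDiff_two_approx_on_sphere hF (by positivity : 0 < ε / 4)
  have hκ : ∀ z : E, ‖z‖ = 1 → |H z - fderiv ℝ H z z| ≤ ε / 2 := fun z hz =>
    (abs_sub_fderiv_apply_self_le hz (fun t ht => hhom t ht z) (hFd z hz)).trans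
      (by linarith [hHF z hz])
  obtain ⟨A, B, hA, hB, happrox⟩ :=
    exists_maxInner_sub_approx_of_contDiff hH hκ (by positivity : 0 < ε / 4)
  refine ⟨A, B, hA, hB, fun x hx => ⟨?_, fun v hv w hw hvmax hwmax => ?_⟩⟩
  · linarith [abs_sub_le (maxInner A hA x - maxInner B hB x) (H x) (F x), (happrox x hx).1,
      (hHF x hx).1]
  · have := norm_sub_le_norm_sub_add_norm_sub (v - w) (∇ H x) (∇ F x)
    rw [norm_gradient_sub_gradient] at this
    linarith [(happrox x hx).2 v hv w hw hvmax hwmax, (hHF x hx).2]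

end Approximation

section NullSets

variable {E : Type*} [NormedAddCommGroup E] [InnerProductSpace ℝ E] [FiniteDimensional ℝ E]
  [MeasurableSpace E] [BorelSpace E]

/-- The great sphere `S ∩ dᗮ` is the unit sphere of the `(dim E - 1)`-dimensional space `dᗮ`, on
which `μH[dim E - 1]` is an additive Haar measure. -/
lemma hausdorffMeasure_sphere_inter_orthogonal (hE : 2 ≤ Module.finrank ℝ E) {d : E}
    (hd : d ≠ 0) :
    μH[(Module.finrank ℝ E : ℝ) - 1] (sphere (0 : E) 1 ∩ {x | ⟪x, d⟫_ℝ = 0}) = 0 := by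
  set V := (ℝ ∙ d)ᗮ
  have hV : Module.finrank ℝ V + 1 = Module.finrank ℝ E := by
    rw [← (ℝ ∙ d).finrank_add_finrank_orthogonal, finrank_span_singleton hd, add_comm]
  have : Nontrivial V := Module.nontrivial_of_finrank_pos (R := ℝ) (by omega)
  have hsub : sphere (0 : E) 1 ∩ {x | ⟪x, d⟫_ℝ = 0} ⊆ V.subtypeₗᵢ '' sphere (0 : V) 1 := by
    rintro x ⟨hx, hxd⟩
    refine ⟨⟨x, ?_⟩, by simpa using hx, rfl⟩
    rw [Submodule.mem_orthogonal_singleton_iff_inner_right, real_inner_comm]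
    exact hxd
  refine measure_mono_null hsub ?_
  have hdim : (Module.finrank ℝ E : ℝ) - 1 = Module.finrank ℝ V := by
    rw [← hV]; push_cast; ring
  rw [V.subtypeₗᵢ.isometry.hausdorffMeasure_image (Or.inl (by rw [hdim]; positivity)), hdim]
  exact Measure.addHaar_sphere _ 0 1

end NullSets

variable {n : ℕ}

lemma homExt_coe (u : Sph n → ℝ) (x : Sph n) : homExt u (x : Eucl n) = u x := by
  simp [homExt, ne_zero_of_mem_unit_sphere x]

lemma homExt_smul (u : Sph n → ℝ) {t : ℝ} (ht : 0 ≤ t) (x : Eucl n) :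
    homExt u (t • x) = t * homExt u x := by
  rcases ht.eq_or_lt with rfl | ht
  · simp [homExt]
  by_cases hx : x = 0
  · simp [homExt, hx]
  simp only [homExt, dif_neg hx, dif_neg (smul_ne_zero ht.ne' hx), norm_smul,
    Real.norm_of_nonneg ht.le, smul_smul, mul_inv_rev, inv_mul_cancel_right₀ ht.ne']
  ring

lemma homExt_restrict {f : Eucl n → ℝ} (hf : ∀ t : ℝ, 0 ≤ t → ∀ x, f (t • x) = t * f x) :
    homExt (fun x : Sph n => f x) = f := by
  funext x
  by_cases hx : x = 0
  · simpa [homExt, hx] using (hf 0 le_rfl 0).symm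
  rw [homExt, dif_neg hx, ← hf _ (norm_nonneg x), smul_inv_smul₀ (norm_ne_zero_iff.mpr hx)]

lemma sphGrad_restrict {f : Eucl n → ℝ} (hf : ∀ t : ℝ, 0 ≤ t → ∀ x, f (t • x) = t * f x)
    {g : Eucl n} {x : Sph n} (hg : HasGradientAt f g x) :
    sphGrad (fun y : Sph n => f y) x = g - f x • (x : Eucl n) := by
  rw [sphGrad, homExt_restrict hf, hg.gradient]

lemma isPiecewiseLinear_of_fintype {ι : Type*} [Fintype ι] {f : Eucl n → ℝ} (hf : Continuous f)
    (C : ι → Set (Eucl n)) (L : ι → (Eucl n →ₗ[ℝ] ℝ)) (hclosed : ∀ i, IsClosed (C i))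
    (hconvex : ∀ i, Convex ℝ (C i)) (hcone : ∀ i, ∀ t : ℝ, 0 ≤ t → ∀ x ∈ C i, t • x ∈ C i)
    (hdisj : Pairwise fun i j => interior (C i) ∩ interior (C j) = ∅)
    (hcover : (⋃ i, C i) = Set.univ) (heq : ∀ i, ∀ x ∈ C i, f x = L i x) :
    IsPiecewiseLinear f := by
  let e := Fintype.equivFin ι
  refine ⟨hf, Fintype.card ι, C ∘ e.symm, L ∘ e.symm, fun _ => hclosed _, fun _ => hconvex _,
    fun _ => hcone _, fun _ _ hij => hdisj (e.symm.injective.ne hij), ?_, fun _ => heq _⟩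
  rw [← hcover]
  exact e.symm.surjective.iUnion_comp C

lemma isPiecewiseLinear_maxInner_sub (A B : Finset (Eucl n)) (hA : A.Nonempty)
    (hB : B.Nonempty) : IsPiecewiseLinear fun x => maxInner A hA x - maxInner B hB x := by
  refine isPiecewiseLinear_of_fintype ((continuous_maxInner A hA).sub (continuous_maxInner B hB))
    (fun p : A × B => maxCone A p.1 ∩ maxCone B p.2)
    (fun p => (innerₛₗ ℝ ((p.1 : Eucl n) - p.2)))
    (fun _ => (isClosed_maxCone _ _).inter (isClosed_maxCone _ _))
    (fun _ => (convex_maxCone _ _).inter (convex_maxCone _ _))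
    (fun _ t ht x hx => ⟨smul_mem_maxCone hx.1 ht, smul_mem_maxCone hx.2 ht⟩) ?_ ?_ ?_
  · rintro ⟨a, b⟩ ⟨a', b'⟩ hne
    simp only [interior_inter]
    by_cases ha : a = a'
    · have hb : (b : Eucl n) ≠ b' := fun h => hne (by rw [ha, Subtype.ext h])
      rw [← Set.subset_empty_iff, ← interior_maxCone_inter_interior_maxCone b.2 b'.2 hb]
      exact Set.inter_subset_inter (Set.inter_subset_right) (Set.inter_subset_right)
    · have ha' : (a : Eucl n) ≠ a' := fun h => ha (Subtype.ext h)
      rw [← Set.subset_empty_iff, ← interior_maxCone_inter_interior_maxCone a.2 a'.2 ha']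
      exact Set.inter_subset_inter (Set.inter_subset_left) (Set.inter_subset_left)
  · refine Set.eq_univ_of_forall fun x => Set.mem_iUnion.mpr ?_
    obtain ⟨a, ha, hxa⟩ := exists_inner_eq_maxInner A hA x
    obtain ⟨b, hb, hxb⟩ := exists_inner_eq_maxInner B hB x
    exact ⟨(⟨a, ha⟩, ⟨b, hb⟩), fun w hw => hxa ▸ inner_le_maxInner hw,
      fun w hw => hxb ▸ inner_le_maxInner hw⟩
  · rintro ⟨⟨a, ha⟩, ⟨b, hb⟩⟩ x ⟨hxa, hxb⟩
    rw [maxInner_eq_of_mem_maxCone hA ha hxa, maxInner_eq_of_mem_maxCone hB hb hxb,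
      innerₛₗ_apply_apply, real_inner_comm x, inner_sub_right]

lemma sphMeasure_setOf_inner_eq_zero (hn : 2 ≤ n) {d : Eucl n} (hd : d ≠ 0) :
    sphMeasure n {x : Sph n | ⟪(x : Eucl n), d⟫_ℝ = 0} = 0 := by
  have hrank : Module.finrank ℝ (Eucl n) = n := finrank_euclideanSpace_fin
  have h0 : (0 : ℝ) ≤ n - 1 := by
    rw [sub_nonneg]; exact_mod_cast (by omega : 1 ≤ n)
  rw [sphMeasure, ← (isometry_subtype_coe (s := Sph n)).hausdorffMeasure_image (Or.inl h0)]
  refine measure_mono_null ?_ (hrank ▸ hausdorffMeasure_sphere_inter_orthogonal (by omega) hd)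
  rintro _ ⟨x, hx, rfl⟩
  exact ⟨x.2, hx⟩

lemma ae_injOn_inner (hn : 2 ≤ n) (S : Finset (Eucl n)) :
    ∀ᵐ x : Sph n ∂sphMeasure n, Set.InjOn (fun v => ⟪(x : Eucl n), v⟫_ℝ) S := by
  have hpair : ∀ v ∈ S, ∀ w ∈ S, ∀ᵐ x : Sph n ∂sphMeasure n,
      ⟪(x : Eucl n), v⟫_ℝ = ⟪(x : Eucl n), w⟫_ℝ → v = w := by
    intro v _ w _
    by_cases hvw : v = w
    · exact Eventually.of_forall fun _ _ => hvw
    filter_upwards [measure_eq_zero_iff_ae_notMem.mp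
      (sphMeasure_setOf_inner_eq_zero hn (sub_ne_zero.mpr hvw))] with x hx heq
    exact absurd (by rw [inner_sub_right, heq, sub_self]) hx
  filter_upwards [(eventually_all_finset S).mpr fun v hv =>
    (eventually_all_finset S).mpr (hpair v hv)] with x hx v hv w hw using hx v hv w hw

lemma exists_isPiecewiseLinear_approx (hn : 2 ≤ n) {u : Sph n → ℝ}
    (hu : ContDiffOn ℝ 1 (homExt u) {(0 : Eucl n)}ᶜ) {ε : ℝ} (hε : 0 < ε) :
    ∃ f : Eucl n → ℝ, IsPiecewiseLinear f ∧ (∀ x : Sph n, |f x - u x| ≤ ε) ∧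
      ∀ᵐ x : Sph n ∂sphMeasure n, ‖sphGrad (fun y : Sph n => f y) x - sphGrad u x‖ ≤ ε := by
  have : Nontrivial (Eucl n) := Module.nontrivial_of_finrank_pos (R := ℝ) (by simp; omega)
  obtain ⟨A, B, hA, hB, happrox⟩ := exists_maxInner_sub_approx hu
    (fun t ht x => homExt_smul u ht.le x) (half_pos hε)
  set f := fun x => maxInner A hA x - maxInner B hB x
  have hhom : ∀ t : ℝ, 0 ≤ t → ∀ x, f (t • x) = t * f x := fun t ht x => by
    simp only [f, maxInner_smul ht, mul_sub]
  have hval : ∀ x : Sph n, |f x - u x| ≤ ε / 2 := fun x =>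
    homExt_coe u x ▸ (happrox x (norm_eq_of_mem_sphere x)).1
  refine ⟨f, isPiecewiseLinear_maxInner_sub A B hA hB, fun x => (hval x).trans (by linarith), ?_⟩
  filter_upwards [ae_injOn_inner hn (A ∪ B)] with x hinj
  obtain ⟨v, hv, hvmax⟩ := exists_inner_eq_maxInner A hA x
  obtain ⟨w, hw, hwmax⟩ := exists_inner_eq_maxInner B hB x
  have hgrad : HasGradientAt f (v - w) x := by
    have h₁ := hasGradientAt_maxInner hv hvmax (hinj.mono (by simp))
    have h₂ := hasGradientAt_maxInner hw hwmax (hinj.mono (by simp))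
    rw [hasGradientAt_iff_hasFDerivAt, map_sub]
    exact h₁.hasFDerivAt.sub h₂.hasFDerivAt
  rw [sphGrad_restrict hhom hgrad, sphGrad]
  calc ‖v - w - f x • (x : Eucl n) - (∇ (homExt u) x - u x • (x : Eucl n))‖
      = ‖(v - w - ∇ (homExt u) x) - (f x - u x) • (x : Eucl n)‖ := by congr 1; module
    _ ≤ ε / 2 + ε / 2 := by
      refine (norm_sub_le _ _).trans (add_le_add ?_ ?_)
      · exact (happrox x (norm_eq_of_mem_sphere x)).2 v hv w hw hvmax hwmax
      · rw [norm_smul, norm_eq_of_mem_sphere, mul_one]; exact hval x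
    _ = ε := by ring

lemma exists_norm_sphGrad_le {u : Sph n → ℝ} (hu : ContDiffOn ℝ 1 (homExt u) {(0 : Eucl n)}ᶜ) :
    ∃ C, ∀ x : Sph n, ‖sphGrad u x‖ ≤ C := by
  have hsub : sphere (0 : Eucl n) 1 ⊆ {0}ᶜ := fun x hx =>
    ne_zero_of_mem_unit_sphere ⟨x, hx⟩
  have hcont : ContinuousOn (fun x => ∇ (homExt u) x - homExt u x • x) (sphere (0 : Eucl n) 1) :=
    (((InnerProductSpace.toDual ℝ (Eucl n)).symm.continuous.comp_continuousOn
      (hu.continuousOn_fderiv_of_isOpen isOpen_compl_singleton le_rfl)).sub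
      (hu.continuousOn.smul continuousOn_id)).mono hsub
  obtain ⟨C, hC⟩ := (isCompact_sphere (0 : Eucl n) 1).exists_bound_of_continuousOn hcont
  exact ⟨C, fun x => by simpa [sphGrad, homExt_coe] using hC x x.2⟩

lemma tauTendsto_of_abs_sub_le {u_ : ℕ → Sph n → ℝ} {u : Sph n → ℝ} {ε : ℕ → ℝ}
    (hε : Tendsto ε atTop (𝓝 0)) (hval : ∀ i x, |u_ i x - u x| ≤ ε i)
    (hgrad : ∀ i, ∀ᵐ x ∂sphMeasure n, ‖sphGrad (u_ i) x - sphGrad u x‖ ≤ ε i) {C : ℝ}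
    (hC : ∀ x, ‖sphGrad u x‖ ≤ C) : TauTendsto u_ u := by
  obtain ⟨B, hB⟩ := hε.bddAbove_range
  have hεB : ∀ i, ε i ≤ B := fun i => hB ⟨i, rfl⟩
  refine ⟨Metric.tendstoUniformly_iff.mpr fun δ hδ => ?_, ?_, max (B + C) 1, by positivity,
    fun i => ?_⟩
  · filter_upwards [hε.eventually_lt_const hδ] with i hi x
    rw [dist_comm, Real.dist_eq]
    exact (hval i x).trans_lt hi
  · filter_upwards [ae_all_iff.mpr hgrad] with x hx
    exact tendsto_iff_norm_sub_tendsto_zero.mpr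
      (squeeze_zero (fun _ => norm_nonneg _) hx hε)
  · filter_upwards [hgrad i] with x hx
    have := norm_le_norm_sub_add (sphGrad (u_ i) x) (sphGrad u x)
    linarith [hεB i, hC x, le_max_left (B + C) 1]

end SphereApprox

/-- `C¹` on the sphere is encoded as: the 1-homogeneous extension is `C¹` away from the origin. -/
theorem approximation_of_C1_functions (n : ℕ) (hn : 2 ≤ n) (u : Sph n → ℝ)
    (hu : ContDiffOn ℝ 1 (homExt u) {(0 : Eucl n)}ᶜ) :
    ∃ f : ℕ → Eucl n → ℝ, (∀ i, IsPiecewiseLinear (f i)) ∧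
      TauTendsto (fun i (x : Sph n) => f i (x : Eucl n)) u := by
  choose f hPL hval hgrad using fun i : ℕ =>
    SphereApprox.exists_isPiecewiseLinear_approx hn hu (Nat.one_div_pos_of_nat (n := i))
  obtain ⟨C, hC⟩ := SphereApprox.exists_norm_sphGrad_le hu
  exact ⟨f, hPL, SphereApprox.tauTendsto_of_abs_sub_le tendsto_one_div_add_atTop_nhds_zero_nat hval
    hgrad hC⟩
end
end

section
/- Let N ∈ ℕ with N ≥ 2. For every ν ∈ ℕ there exist N_ν = ν^{N−1} points x₁, …, x_{N_ν} on the unit sphere S^{N−1} ⊆ ℝ^N such that ‖x_i − x_j‖ ≥ 1/(√N · ν) for all i ≠ j. -/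
/-!
The points `k / (√N ν)`, `k ∈ {0, …, ν - 1}^(N-1)`, form a grid in `ℝ^(N-1)` whose distinct points
are at distance at least `1 / (√N ν)` and which lies in the closed unit ball, since
`(N - 1) ν² / (N ν²) ≤ 1`. Lifting `y` to `(y, √(1 - ‖y‖²))` maps the unit ball onto the upper
hemisphere of `S^(N-1)` without decreasing distances.
-/

open Real

def latticePoint {ι : Type*} (k : ι → ℤ) : EuclideanSpace ℝ ι :=
  WithLp.toLp 2 fun i => (k i : ℝ)

section latticePoint

variable {ι : Type*} [Fintype ι]

theorem one_le_norm_latticePoint_sub {k l : ι → ℤ} (h : k ≠ l) :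
    1 ≤ ‖latticePoint k - latticePoint l‖ := by
  obtain ⟨i, hi⟩ := Function.ne_iff.mp h
  calc (1 : ℝ) ≤ |(k i : ℝ) - l i| := by exact_mod_cast Int.one_le_abs (sub_ne_zero.mpr hi)
    _ = ‖(latticePoint k - latticePoint l) i‖ := by simp [latticePoint, Real.norm_eq_abs]
    _ ≤ _ := PiLp.norm_apply_le _ i

theorem norm_latticePoint_sq_le {k : ι → ℤ} {m : ℤ} (h : ∀ i, |k i| ≤ m) :
    ‖latticePoint k‖ ^ 2 ≤ Fintype.card ι * m ^ 2 := by
  rw [EuclideanSpace.real_norm_sq_eq]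
  calc ∑ i, latticePoint k i ^ 2 ≤ ∑ _i : ι, (m : ℝ) ^ 2 := by
        refine Finset.sum_le_sum fun i _ => ?_
        have hk : k i ^ 2 ≤ m ^ 2 := sq_abs (k i) ▸ pow_le_pow_left₀ (abs_nonneg (k i)) (h i) 2
        simpa [latticePoint] using (show (k i : ℝ) ^ 2 ≤ (m : ℝ) ^ 2 by exact_mod_cast hk)
    _ = Fintype.card ι * m ^ 2 := by simp

end latticePoint

theorem exists_separated_grid_in_unitBall {n ν : ℕ} {c : ℝ} (hc : 0 ≤ c) (hνc : n * ν ^ 2 ≤ c ^ 2) :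
    ∃ y : Fin (ν ^ n) → EuclideanSpace ℝ (Fin n),
      (∀ a, ‖y a‖ ≤ 1) ∧ ∀ a b, a ≠ b → c⁻¹ ≤ ‖y a - y b‖ := by
  let digits : Fin (ν ^ n) → Fin n → ℤ := fun a j => (finFunctionFinEquiv.symm a j : ℕ)
  refine ⟨fun a => c⁻¹ • latticePoint (digits a), fun a => ?_, fun a b hab => ?_⟩
  · have hv := norm_latticePoint_sq_le (m := ν) fun j =>
      (Nat.abs_cast _).trans_le (by exact_mod_cast (finFunctionFinEquiv.symm a j).isLt.le)
    rw [Fintype.card_fin, Int.cast_natCast] at hv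
    rw [← pow_le_one_iff_of_nonneg (norm_nonneg _) two_ne_zero, norm_smul, mul_pow, norm_inv,
      Real.norm_of_nonneg hc, inv_pow, ← div_eq_inv_mul]
    exact div_le_one_of_le₀ (hv.trans hνc) (sq_nonneg c)
  · have hdigits : digits a ≠ digits b := fun h => hab <| finFunctionFinEquiv.symm.injective <|
      funext fun j => Fin.ext <| Int.ofNat_inj.mp (congrFun h j)
    rw [← smul_sub, norm_smul, norm_inv, Real.norm_of_nonneg hc]
    exact le_mul_of_one_le_right (by positivity) (one_le_norm_latticePoint_sub hdigits)

theorem norm_sq_toLp_snoc {n : ℕ} (y : EuclideanSpace ℝ (Fin n)) (t : ℝ) :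
    ‖(WithLp.toLp 2 (Fin.snoc (fun i => y i) t : Fin (n + 1) → ℝ) :
      EuclideanSpace ℝ (Fin (n + 1)))‖ ^ 2 = ‖y‖ ^ 2 + t ^ 2 := by
  simp [EuclideanSpace.real_norm_sq_eq, Fin.sum_univ_castSucc]

noncomputable def sphereLift {n : ℕ} (y : EuclideanSpace ℝ (Fin n)) :
    EuclideanSpace ℝ (Fin (n + 1)) :=
  WithLp.toLp 2 (Fin.snoc (fun i => y i) √(1 - ‖y‖ ^ 2))

section sphereLift

variable {n : ℕ}

theorem norm_sphereLift {y : EuclideanSpace ℝ (Fin n)} (hy : ‖y‖ ≤ 1) : ‖sphereLift y‖ = 1 := by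
  have hy2 : ‖y‖ ^ 2 ≤ 1 := pow_le_one₀ (norm_nonneg y) hy
  rw [← pow_left_inj₀ (norm_nonneg _) zero_le_one two_ne_zero, sphereLift, norm_sq_toLp_snoc,
    sq_sqrt (by linarith)]
  ring

theorem norm_sub_le_norm_sphereLift_sub (y z : EuclideanSpace ℝ (Fin n)) :
    ‖y - z‖ ≤ ‖sphereLift y - sphereLift z‖ := by
  have hsub : sphereLift y - sphereLift z = WithLp.toLp 2
      (Fin.snoc (fun i => (y - z) i) (√(1 - ‖y‖ ^ 2) - √(1 - ‖z‖ ^ 2)) : Fin (n + 1) → ℝ) := by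
    ext i
    refine Fin.lastCases ?_ (fun j => ?_) i <;> simp [sphereLift]
  rw [← pow_le_pow_iff_left₀ (norm_nonneg _) (norm_nonneg _) two_ne_zero, hsub, norm_sq_toLp_snoc]
  exact le_add_of_nonneg_right (sq_nonneg _)

end sphereLift

/-- For every `N ≥ 2` and every `ν ∈ ℕ` there are `ν^{N-1}` points on the unit
sphere `S^{N-1} ⊆ ℝ^N` with pairwise distances at least `1/(√N · ν)`. -/
theorem separated_points_on_sphere (N : ℕ) (hN : 2 ≤ N) (ν : ℕ) :
    ∃ x : Fin (ν ^ (N - 1)) → EuclideanSpace ℝ (Fin N),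
      (∀ a, ‖x a‖ = 1) ∧
      ∀ a b, a ≠ b → 1 / (Real.sqrt N * ν) ≤ ‖x a - x b‖ := by
  obtain ⟨n, rfl⟩ : ∃ n, N = n + 1 := ⟨N - 1, by omega⟩
  have hνc : n * ν ^ 2 ≤ (√(n + 1 : ℕ) * ν) ^ 2 := by
    rw [mul_pow, sq_sqrt (by positivity)]
    gcongr
    linarith
  obtain ⟨y, hy_norm, hy_sep⟩ := exists_separated_grid_in_unitBall (by positivity) hνc
  refine ⟨fun a => sphereLift (y a), fun a => norm_sphereLift (hy_norm a), fun a b hab => ?_⟩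
  rw [one_div]
  exact (hy_sep a b hab).trans (norm_sub_le_norm_sphereLift_sub _ _)
end
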